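/- Let 𝒜 be a deterministic learning algorithm whose outputs all lie in a family of predictors 𝒫 ⊆ [0,1]^X, and let 𝒞 be a collection of subsets of X. Suppose 𝒜 is (𝒞, ε₁)-empirically multiaccurate and 𝒫 satisfies (𝒞, n, ε₂, δ₂)-uniform convergence. Then for every probability distribution D_X on X, with probability at least 1 − δ₂ over x_1,…,x_n drawn i.i.d. from D_X, the following holds: for every labeling y_1,…,y_n ∈ {0,1} and every dataset S' = ((x'_1,y'_1),…,(x'_m,y'_m)) in X × {0,1} of any size m, writing S = ((x_1,y_1),…,(x_n,y_n)), p = 𝒜(S), p' = 𝒜(S'), for every C ∈ 𝒞: |E_{x∼D_X}[(p(x) − p'(x))·1[x ∈ C]]| ≤ (1/n)·|Σ_{i=1}^n y_i·1[x_i ∈ C] − Σ_{j=1}^m y'_j·1[x'_j ∈ C]| + (1/n)·|(S Δ_X S') ∩ C| + (1 + m/n)·ε₁ + 2ε₂. -/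

import Mathlib

/-! Uniform convergence of `p(x)·1[x ∈ C]` concerns the unlabeled sample only, so it can be invoked
for `D_X` equipped with any fixed labeling. On a good sample, `n·E[p·1_C]` and `n·E[p'·1_C]` are
within `n ε₂` of the sums of `p·1_C` and `p'·1_C` over `x₁, …, xₙ`. Empirical multiaccuracy puts the
first sum within `n ε₁` of the label sum of `S`. Since `0 ≤ p' ≤ 1`, the second sum differs from the
sum of `p'·1_C` over `S'` by at most `|(S Δ_X S') ∩ C|`, and multiaccuracy on `S'` puts that within
`m ε₁` of the label sum of `S'`. -/

open Finset
open scoped BigOperators Classical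

noncomputable section

variable {X : Type*}

/-- The real value of a Boolean label. -/
def bval (y : Bool) : ℝ := if y then 1 else 0

/-- The real-valued indicator of a set `C ⊆ X`. -/
def ind (C : Set X) (x : X) : ℝ := if x ∈ C then 1 else 0

/-- `D` is a probability mass function on a finite type. -/
def IsDist {α : Type*} [Fintype α] (D : α → ℝ) : Prop :=
  (∀ a, 0 ≤ D a) ∧ ∑ a, D a = 1

/-- The multiaccuracy error `MA-err_D(p, C) = E_{(x,y)∼D}[(y − p(x))·1[x ∈ C]]`. -/
def MAerr [Fintype X] (D : X × Bool → ℝ) (p : X → ℝ) (C : Set X) : ℝ :=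
  ∑ z : X × Bool, D z * ((bval z.2 - p z.1) * ind C z.1)

/-- The `X`-marginal of a distribution on `X × Bool`. -/
def marg [Fintype X] (D : X × Bool → ℝ) (x : X) : ℝ := ∑ y : Bool, D (x, y)

/-- The statistical distance between two distributions on `X`, restricted to `C`:
`Δ_C(DX, DX') = Σ_{x ∈ C} |DX x − DX' x|`. -/
def statDist [Fintype X] (DX DX' : X → ℝ) (C : Set X) : ℝ :=
  ∑ x : X, ind C x * |DX x - DX' x|

/-- The probability, over `n` i.i.d. draws from `D`, of the event `E`. -/
def iidProb {α : Type*} [Fintype α] (D : α → ℝ) (n : ℕ)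
    (E : (Fin n → α) → Prop) : ℝ :=
  ∑ s : Fin n → α, if E s then ∏ i, D (s i) else 0

/-- The multiplicity `μ_S(x)` of the point `x` among the `x`-values of the dataset `S`. -/
def mult {n : ℕ} (S : Fin n → X × Bool) (x : X) : ℕ :=
  (univ.filter fun i => (S i).1 = x).card

/-- `|(S Δ_X S') ∩ C| = Σ_{x ∈ C} |μ_S(x) − μ_{S'}(x)|`, the size of the multiset
symmetric difference of the `x`-values of `S` and `S'`, restricted to `C`. -/
def symmDiffC [Fintype X] {n m : ℕ} (S : Fin n → X × Bool) (S' : Fin m → X × Bool)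
    (C : Set X) : ℝ :=
  ∑ x : X, ind C x * |(mult S x : ℝ) - (mult S' x : ℝ)|

/-- `𝒜` is `(𝒞, ε)`-empirically multiaccurate: for every `k` and every dataset `S` of size `k`,
the predictor `𝒜(S)` satisfies `|(1/k)·Σᵢ (yᵢ − p(xᵢ))·1[xᵢ ∈ C]| ≤ ε` for all `C ∈ 𝒞`. -/
def EmpMA (A : ∀ k, (Fin k → X × Bool) → X → ℝ) (𝒞 : Set (Set X)) (ε : ℝ) : Prop :=
  ∀ (k : ℕ), 0 < k → ∀ S : Fin k → X × Bool, ∀ C ∈ 𝒞,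
    |(1 / (k : ℝ)) * ∑ i, (bval (S i).2 - A k S (S i).1) * ind C (S i).1| ≤ ε

/-- The family of predictors `𝓟` satisfies `(𝒞, n, ε, δ)`-uniform convergence: for every
distribution `D` on `X × {0,1}`, with probability at least `1 − δ` over `n` i.i.d. draws from
`D`, for all `p ∈ 𝓟` and `C ∈ 𝒞` the empirical averages of `p(x)·1[x ∈ C]` and `y·1[x ∈ C]`
are within `ε` of their expectations. -/
def UnifConv [Fintype X] (𝓟 : Set (X → ℝ)) (𝒞 : Set (Set X)) (n : ℕ) (ε δ : ℝ) : Prop :=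
  ∀ D : X × Bool → ℝ, IsDist D →
    1 - δ ≤ iidProb D n (fun s => ∀ p ∈ 𝓟, ∀ C ∈ 𝒞,
      |(1 / (n : ℝ)) * ∑ i, p (s i).1 * ind C (s i).1
          - ∑ z : X × Bool, D z * (p z.1 * ind C z.1)| ≤ ε ∧
      |(1 / (n : ℝ)) * ∑ i, bval (s i).2 * ind C (s i).1
          - ∑ z : X × Bool, D z * (bval z.2 * ind C z.1)| ≤ ε)

lemma iidProb_mono {α : Type*} [Fintype α] {D : α → ℝ} (hD : ∀ a, 0 ≤ D a) (n : ℕ)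
    {E F : (Fin n → α) → Prop} (h : ∀ s, E s → F s) :
    iidProb D n E ≤ iidProb D n F := by
  refine sum_le_sum fun s _ => ?_
  by_cases hE : E s
  · simp [hE, h s hE]
  · simp only [hE, if_false]
    split_ifs
    exacts [prod_nonneg fun i _ => hD (s i), le_rfl]

lemma iidProb_eq_of_injective {α β : Type*} [Fintype α] [Fintype β] {f : α → β}
    (hf : Function.Injective f) {D : β → ℝ} (hD : ∀ b ∉ Set.range f, D b = 0) (n : ℕ)
    (E : (Fin n → β) → Prop) :
    iidProb D n E = iidProb (D ∘ f) n (fun s => E (f ∘ s)) := by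
  refine (Fintype.sum_of_injective (f ∘ ·) hf.comp_left _ _ (fun s hs => ?_) fun s => rfl).symm
  obtain ⟨i, hi⟩ : ∃ i, s i ∉ Set.range f := by
    by_contra! h
    choose t ht using h
    exact hs ⟨t, funext ht⟩
  have hzero : ∏ j, D (s j) = 0 := prod_eq_zero (mem_univ i) (hD _ hi)
  simp [hzero]

lemma EmpMA.abs_sum_le {A : ∀ k, (Fin k → X × Bool) → X → ℝ} {𝒞 : Set (Set X)} {ε : ℝ}
    (hA : EmpMA A 𝒞 ε) {k : ℕ} (S : Fin k → X × Bool) {C : Set X} (hC : C ∈ 𝒞) :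
    |∑ i, (bval (S i).2 - A k S (S i).1) * ind C (S i).1| ≤ k * ε := by
  rcases k.eq_zero_or_pos with rfl | hk
  · simp
  have hk' : (0 : ℝ) < k := by exact_mod_cast hk
  have h := hA k hk S C hC
  rwa [abs_mul, abs_of_pos (one_div_pos.mpr hk'), one_div, inv_mul_le_iff₀ hk'] at h

section

variable [Fintype X]

def falseLabeled (DX : X → ℝ) (z : X × Bool) : ℝ := if z.2 then 0 else DX z.1

lemma sum_falseLabeled_mul (DX : X → ℝ) (g : X → ℝ) :
    ∑ z, falseLabeled DX z * g z.1 = ∑ x, DX x * g x := by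
  simp [falseLabeled, Fintype.sum_prod_type]

lemma isDist_falseLabeled {DX : X → ℝ} (hDX : IsDist DX) : IsDist (falseLabeled DX) := by
  refine ⟨fun z => ?_, ?_⟩
  · unfold falseLabeled
    split_ifs
    exacts [le_rfl, hDX.1 _]
  · simpa using (sum_falseLabeled_mul DX fun _ => 1).trans (by simpa using hDX.2)

lemma iidProb_falseLabeled (DX : X → ℝ) (n : ℕ) (E : (Fin n → X × Bool) → Prop) :
    iidProb (falseLabeled DX) n E = iidProb DX n (fun xs => E fun i => (xs i, false)) := by
  rw [iidProb_eq_of_injective (f := fun x => (x, false)) (fun x y h => congrArg Prod.fst h)]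
  · rfl
  · rintro ⟨x, _ | _⟩ h
    · exact absurd ⟨x, rfl⟩ h
    · rfl

lemma sum_comp_fst_eq_sum_mult {k : ℕ} (S : Fin k → X × Bool) (g : X → ℝ) :
    ∑ i, g (S i).1 = ∑ x, (mult S x : ℝ) * g x := by
  rw [← sum_fiberwise' univ (fun i => (S i).1) g]
  refine sum_congr rfl fun x _ => ?_
  rw [sum_const, nsmul_eq_mul]
  rfl

lemma abs_sum_sub_sum_le_symmDiffC {q : X → ℝ} (hq : ∀ x, q x ∈ Set.Icc (0 : ℝ) 1)
    {n m : ℕ} (S : Fin n → X × Bool) (S' : Fin m → X × Bool) (C : Set X) :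
    |∑ i, q (S i).1 * ind C (S i).1 - ∑ j, q (S' j).1 * ind C (S' j).1| ≤ symmDiffC S S' C := by
  rw [sum_comp_fst_eq_sum_mult S (fun x => q x * ind C x),
    sum_comp_fst_eq_sum_mult S' (fun x => q x * ind C x), ← sum_sub_distrib]
  refine (abs_sum_le_sum_abs _ _).trans (sum_le_sum fun x _ => ?_)
  obtain ⟨hq0, hq1⟩ := hq x
  rw [← sub_mul, abs_mul, mul_comm]
  gcongr
  unfold ind
  split_ifs <;> simp [abs_of_nonneg hq0, hq1]

theorem abs_expect_sub_le_of_uniform {A : ∀ k, (Fin k → X × Bool) → X → ℝ} {𝓟 : Set (X → ℝ)}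
    (h𝓟01 : ∀ p ∈ 𝓟, ∀ x, p x ∈ Set.Icc (0 : ℝ) 1) (hA𝓟 : ∀ k (S : Fin k → X × Bool), A k S ∈ 𝓟)
    {𝒞 : Set (Set X)} {ε₁ ε₂ : ℝ} (hEmp : EmpMA A 𝒞 ε₁) {DX : X → ℝ} {n : ℕ} (hn : 0 < n)
    {xs : Fin n → X}
    (hxs : ∀ p ∈ 𝓟, ∀ C ∈ 𝒞,
      |(1 / (n : ℝ)) * ∑ i, p (xs i) * ind C (xs i) - ∑ x, DX x * (p x * ind C x)| ≤ ε₂)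
    (ys : Fin n → Bool) {m : ℕ} (S' : Fin m → X × Bool) {C : Set X} (hC : C ∈ 𝒞) :
    |∑ x : X, DX x * ((A n (fun i => (xs i, ys i)) x - A m S' x) * ind C x)| ≤
      (1 / (n : ℝ)) *
          |∑ i, bval (ys i) * ind C (xs i) - ∑ j, bval (S' j).2 * ind C (S' j).1|
        + (1 / (n : ℝ)) * symmDiffC (fun i => (xs i, ys i)) S' C
        + (1 + (m : ℝ) / (n : ℝ)) * ε₁ + 2 * ε₂ := by
  set S : Fin n → X × Bool := fun i => (xs i, ys i)
  set p := A n S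
  set p' := A m S'
  set a := ∑ x, DX x * (p x * ind C x)
  set b := ∑ x, DX x * (p' x * ind C x)
  set c := ∑ i, p (xs i) * ind C (xs i)
  set d := ∑ i, p' (xs i) * ind C (xs i)
  set e := ∑ i, bval (ys i) * ind C (xs i)
  set f := ∑ j, bval (S' j).2 * ind C (S' j).1
  set g := ∑ j, p' (S' j).1 * ind C (S' j).1
  have hn' : (0 : ℝ) < n := by exact_mod_cast hn
  have hc : |c / n - a| ≤ ε₂ := by simpa [div_eq_inv_mul] using hxs p (hA𝓟 n S) C hC
  have hd : |d / n - b| ≤ ε₂ := by simpa [div_eq_inv_mul] using hxs p' (hA𝓟 m S') C hC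
  have hce : |c - e| ≤ n * ε₁ := by
    rw [abs_sub_comm, ← sum_sub_distrib]
    simpa only [sub_mul] using hEmp.abs_sum_le S hC
  have hfg : |f - g| ≤ m * ε₁ := by
    rw [← sum_sub_distrib]
    simpa only [sub_mul] using hEmp.abs_sum_le S' hC
  have hgd : |g - d| ≤ symmDiffC S S' C := by
    rw [abs_sub_comm]
    exact abs_sum_sub_sum_le_symmDiffC (h𝓟01 p' (hA𝓟 m S')) S S' C
  have hab : ∑ x, DX x * ((p x - p' x) * ind C x) = a - b := by
    rw [← sum_sub_distrib]
    exact sum_congr rfl fun x _ => by ring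
  calc |∑ x, DX x * ((p x - p' x) * ind C x)|
      = |(d / n - b) - (c / n - a) + ((c - e) + (e - f) + (f - g) + (g - d)) / n| := by
        rw [hab]; congr 1; field_simp; ring
    _ ≤ |d / n - b| + |c / n - a| + (|c - e| + |e - f| + |f - g| + |g - d|) / n := by
        refine (abs_add_le _ _).trans (add_le_add (abs_sub _ _) ?_)
        rw [abs_div, abs_of_pos hn']
        gcongr
        refine (abs_add_le _ _).trans (add_le_add ?_ le_rfl)
        exact (abs_add_le _ _).trans (add_le_add (abs_add_le _ _) le_rfl)
    _ ≤ ε₂ + ε₂ + (n * ε₁ + |e - f| + m * ε₁ + symmDiffC S S' C) / n := by gcongr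
    _ = _ := by field_simp; ring

end

theorem stmt_6_general [Fintype X]
    (A : ∀ k, (Fin k → X × Bool) → X → ℝ)
    (𝓟 : Set (X → ℝ)) (h𝓟01 : ∀ p ∈ 𝓟, ∀ x, p x ∈ Set.Icc (0 : ℝ) 1)
    (hA𝓟 : ∀ k (S : Fin k → X × Bool), A k S ∈ 𝓟)
    (𝒞 : Set (Set X)) (n : ℕ) (hn : 0 < n) (ε₁ ε₂ δ₂ : ℝ)
    (hEmp : EmpMA A 𝒞 ε₁)
    (hUC : UnifConv 𝓟 𝒞 n ε₂ δ₂) :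
    ∀ DX : X → ℝ, IsDist DX →
      1 - δ₂ ≤ iidProb DX n (fun xs =>
        ∀ (ys : Fin n → Bool) (m : ℕ) (S' : Fin m → X × Bool), ∀ C ∈ 𝒞,
          |∑ x : X, DX x * ((A n (fun i => (xs i, ys i)) x - A m S' x) * ind C x)| ≤
            (1 / (n : ℝ)) *
                |∑ i, bval (ys i) * ind C (xs i) - ∑ j, bval (S' j).2 * ind C (S' j).1|
              + (1 / (n : ℝ)) * symmDiffC (fun i => (xs i, ys i)) S' C
              + (1 + (m : ℝ) / (n : ℝ)) * ε₁ + 2 * ε₂) := by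
  intro DX hDX
  have hUC' := hUC _ (isDist_falseLabeled hDX)
  rw [iidProb_falseLabeled] at hUC'
  refine hUC'.trans (iidProb_mono hDX.1 n fun xs hxs ys m S' C hC => ?_)
  refine abs_expect_sub_le_of_uniform h𝓟01 hA𝓟 hEmp hn (fun p hp C hC => ?_) ys S' hC
  simpa only [sum_falseLabeled_mul DX fun x => p x * ind C x] using (hxs p hp C hC).1

/-- Empirical MA + uniform convergence ⟹ multigroup robustness.
If `𝒜` outputs predictors in `𝓟`, is `(𝒞, ε₁)`-empirically multiaccurate, and `𝓟` satisfies
`(𝒞, n, ε₂, δ₂)`-uniform convergence, then for every distribution `D_X` on `X`, with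
probability at least `1 − δ₂` over `x₁, …, xₙ` i.i.d. from `D_X`: for every labeling
`y₁, …, yₙ` and every dataset `S'` of any size `m`, writing `S = ((xᵢ, yᵢ))ᵢ`, `p = 𝒜(S)`,
`p' = 𝒜(S')`, for every `C ∈ 𝒞`:
`|E_{x∼D_X}[(p(x) − p'(x))·1[x ∈ C]]|
  ≤ (1/n)·|Σᵢ yᵢ·1[xᵢ ∈ C] − Σⱼ y'ⱼ·1[x'ⱼ ∈ C]| + (1/n)·|(S Δ_X S') ∩ C|
    + (1 + m/n)·ε₁ + 2ε₂`. -/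
theorem stmt_6 [Fintype X] [Nonempty X]
    (A : ∀ k, (Fin k → X × Bool) → X → ℝ)
    (𝓟 : Set (X → ℝ)) (h𝓟01 : ∀ p ∈ 𝓟, ∀ x, p x ∈ Set.Icc (0 : ℝ) 1)
    (hA𝓟 : ∀ k (S : Fin k → X × Bool), A k S ∈ 𝓟)
    (𝒞 : Set (Set X)) (n : ℕ) (hn : 0 < n) (ε₁ ε₂ δ₂ : ℝ)
    (hEmp : EmpMA A 𝒞 ε₁)
    (hUC : UnifConv 𝓟 𝒞 n ε₂ δ₂) :
    ∀ DX : X → ℝ, IsDist DX →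
      1 - δ₂ ≤ iidProb DX n (fun xs =>
        ∀ (ys : Fin n → Bool) (m : ℕ) (S' : Fin m → X × Bool), ∀ C ∈ 𝒞,
          |∑ x : X, DX x * ((A n (fun i => (xs i, ys i)) x - A m S' x) * ind C x)| ≤
            (1 / (n : ℝ)) *
                |∑ i, bval (ys i) * ind C (xs i) - ∑ j, bval (S' j).2 * ind C (S' j).1|
              + (1 / (n : ℝ)) * symmDiffC (fun i => (xs i, ys i)) S' C
              + (1 + (m : ℝ) / (n : ℝ)) * ε₁ + 2 * ε₂) :=
  stmt_6_general A 𝓟 h𝓟01 hA𝓟 𝒞 n hn ε₁ ε₂ δ₂ hEmp hUC
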